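/- Let Δ and Θ be distributions over S and T respectively, and R ⊆ S × T. Then Δ R† Θ if and only if there exists a weight function w : S × T → [0,1] such that (a) for all s ∈ S, Σ_{t∈T} w(s,t) = Δ(s); (b) for all t ∈ T, Σ_{s∈S} w(s,t) = Θ(t); and (c) for all (s,t) ∈ S × T, w(s,t) > 0 implies s R t. -/

import Mathlib

/-!
A weight function is a coupling of `Δ` and `Θ` supported on `R`. The product of two related
point distributions is such a coupling, and couplings are preserved by convex combinations, so
every pair in `R†` has one. Conversely, a coupling `w` exhibits `Δ R† Θ` as the convex combination
`∑ w(s,t) • (s̄, t̄)`, where only pairs of positive weight, hence related pairs, contribute.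
-/

open scoped Classical

/-- A (discrete) probability distribution over a finite set `S`. -/
structure FDist (S : Type*) [Fintype S] where
  f : S → ℝ
  nonneg : ∀ s, 0 ≤ f s
  sum_one : ∑ s, f s = 1

/-- The point distribution at `s`. -/
noncomputable def FDist.point {S : Type*} [Fintype S] (s : S) : FDist S where
  f := fun u => if u = s then 1 else 0
  nonneg := by intro u; split <;> norm_num
  sum_one := by simp

/-- The lifting `R†` of a relation to distributions: the smallest relation
relating point distributions of related states and closed under convex
combinations. -/
inductive Lift {S T : Type*} [Fintype S] [Fintype T] (R : S → T → Prop) :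
    FDist S → FDist T → Prop
  | point {s : S} {t : T} :
      R s t → Lift R (FDist.point s) (FDist.point t)
  | convex (I : Finset ℕ) (p : ℕ → ℝ)
      (hp : ∀ i ∈ I, 0 ≤ p i) (hsum : ∑ i ∈ I, p i = 1)
      (Δs : ℕ → FDist S) (Θs : ℕ → FDist T)
      (h : ∀ i ∈ I, Lift R (Δs i) (Θs i))
      (Δ : FDist S) (Θ : FDist T)
      (hΔ : Δ.f = ∑ i ∈ I, p i • (Δs i).f)
      (hΘ : Θ.f = ∑ i ∈ I, p i • (Θs i).f) :
      Lift R Δ Θ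

section

open Finset

variable {S T : Type*} [Fintype S] [Fintype T] {R : S → T → Prop} {Δ : FDist S} {Θ : FDist T}

theorem FDist.le_one (Δ : FDist S) (s : S) : Δ.f s ≤ 1 :=
  Δ.sum_one ▸ single_le_sum (fun u _ => Δ.nonneg u) (mem_univ s)

theorem FDist.sum_smul_point (c : S → ℝ) : ∑ s, c s • (FDist.point s).f = c := by
  funext u
  simp [Finset.sum_apply, FDist.point]

theorem sum_filter_pos_smul {ι R M : Type*} [Semiring R] [PartialOrder R] [AddCommMonoid M]
    [Module R M] {s : Finset ι} {p : ι → R} (hp : ∀ i ∈ s, 0 ≤ p i) (v : ι → M) :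
    ∑ i ∈ s with 0 < p i, p i • v i = ∑ i ∈ s, p i • v i :=
  sum_filter_of_ne fun i hi hne => (hp i hi).lt_of_ne' fun h0 => hne (by rw [h0, zero_smul])

structure IsWeightFunction (R : S → T → Prop) (Δ : FDist S) (Θ : FDist T) (w : S → T → ℝ) :
    Prop where
  nonneg : ∀ s t, 0 ≤ w s t
  sum_row : ∀ s, ∑ t, w s t = Δ.f s
  sum_col : ∀ t, ∑ s, w s t = Θ.f t
  rel : ∀ s t, 0 < w s t → R s t

namespace IsWeightFunction

variable {w : S → T → ℝ}

theorem le_one (hw : IsWeightFunction R Δ Θ w) (s : S) (t : T) : w s t ≤ 1 :=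
  calc w s t ≤ ∑ u, w s u := single_le_sum (fun u _ => hw.nonneg s u) (mem_univ t)
    _ = Δ.f s := hw.sum_row s
    _ ≤ 1 := Δ.le_one s

theorem point {s : S} {t : T} (h : R s t) :
    IsWeightFunction R (FDist.point s) (FDist.point t)
      (fun u v => (FDist.point s).f u * (FDist.point t).f v) where
  nonneg u v := mul_nonneg ((FDist.point s).nonneg u) ((FDist.point t).nonneg v)
  sum_row u := by rw [← mul_sum, (FDist.point t).sum_one, mul_one]
  sum_col v := by rw [← sum_mul, (FDist.point s).sum_one, one_mul]
  rel u v hpos := by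
    simp only [FDist.point] at hpos
    split_ifs at hpos with hu hv
    · exact hu ▸ hv ▸ h
    all_goals norm_num at hpos

theorem convex (I : Finset ℕ) (p : ℕ → ℝ) (hp : ∀ i ∈ I, 0 ≤ p i)
    (Δs : ℕ → FDist S) (Θs : ℕ → FDist T) (W : ℕ → S → T → ℝ)
    (hW : ∀ i ∈ I, IsWeightFunction R (Δs i) (Θs i) (W i))
    (hΔ : Δ.f = ∑ i ∈ I, p i • (Δs i).f) (hΘ : Θ.f = ∑ i ∈ I, p i • (Θs i).f) :
    IsWeightFunction R Δ Θ (∑ i ∈ I, p i • W i) where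
  nonneg s t := by
    simp only [Finset.sum_apply, Pi.smul_apply, smul_eq_mul]
    exact sum_nonneg fun i hi => mul_nonneg (hp i hi) ((hW i hi).nonneg s t)
  sum_row s := by
    simp only [hΔ, Finset.sum_apply, Pi.smul_apply, smul_eq_mul]
    rw [sum_comm]
    exact sum_congr rfl fun i hi => by rw [← mul_sum, (hW i hi).sum_row]
  sum_col t := by
    simp only [hΘ, Finset.sum_apply, Pi.smul_apply, smul_eq_mul]
    rw [sum_comm]
    exact sum_congr rfl fun i hi => by rw [← mul_sum, (hW i hi).sum_col]
  rel s t hpos := by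
    simp only [Finset.sum_apply, Pi.smul_apply, smul_eq_mul] at hpos
    obtain ⟨i, hi, hpos_i⟩ := exists_lt_of_sum_lt (f := fun _ => (0 : ℝ)) (by simpa using hpos)
    exact (hW i hi).rel s t (pos_of_mul_pos_right hpos_i (hp i hi))

end IsWeightFunction

theorem Lift.exists_isWeightFunction (h : Lift R Δ Θ) : ∃ w, IsWeightFunction R Δ Θ w := by
  induction h with
  | point hst => exact ⟨_, .point hst⟩
  | convex I p hp _ Δs Θs _ Δ Θ hΔ hΘ ih =>
    choose! W hW using ih
    exact ⟨_, .convex I p hp Δs Θs W hW hΔ hΘ⟩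

theorem Lift.convex_of_fintype {ι : Type*} [Fintype ι] (p : ι → ℝ)
    (hp : ∀ i, 0 ≤ p i) (hsum : ∑ i, p i = 1) (Δs : ι → FDist S) (Θs : ι → FDist T)
    (h : ∀ i, 0 < p i → Lift R (Δs i) (Θs i)) (Δ : FDist S) (Θ : FDist T)
    (hΔ : Δ.f = ∑ i, p i • (Δs i).f) (hΘ : Θ.f = ∑ i, p i • (Θs i).f) : Lift R Δ Θ := by
  have : Nonempty ι := by
    by_contra hι
    simp [not_nonempty_iff.mp hι] at hsum
  -- `Lift.convex` indexes by naturals, so `ι` is transported along an embedding into `ℕ`.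
  let e : ι ↪ ℕ := (Fintype.equivFin ι).toEmbedding.trans Fin.valEmbedding
  have he : ∀ i, Function.invFun e (e i) = i := Function.leftInverse_invFun e.injective
  have hp' : ∀ i ∈ univ, 0 ≤ p i := fun i _ => hp i
  refine Lift.convex ((univ.filter (0 < p ·)).map e) (p ∘ Function.invFun e) (fun _ _ => hp _)
    ?_ (Δs ∘ Function.invFun e) (Θs ∘ Function.invFun e) ?_ Δ Θ ?_ ?_
  · have := (sum_filter_pos_smul hp' fun _ => (1 : ℝ)).trans (by simpa using hsum)
    simpa [he, sum_map] using this
  · simp only [mem_map, mem_filter, mem_univ, true_and]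
    rintro _ ⟨i, hi, rfl⟩
    simpa [he] using h i hi
  · simpa [he, sum_map] using hΔ.trans (sum_filter_pos_smul hp' _).symm
  · simpa [he, sum_map] using hΘ.trans (sum_filter_pos_smul hp' _).symm

theorem Lift.of_isWeightFunction {w : S → T → ℝ} (hw : IsWeightFunction R Δ Θ w) : Lift R Δ Θ := by
  refine Lift.convex_of_fintype (fun x : S × T => w x.1 x.2) (fun x => hw.nonneg x.1 x.2) ?_
    (fun x => FDist.point x.1) (fun x => FDist.point x.2)
    (fun x hx => Lift.point (hw.rel x.1 x.2 hx)) Δ Θ ?_ ?_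
  · simp only [Fintype.sum_prod_type, hw.sum_row, Δ.sum_one]
  · simp only [Fintype.sum_prod_type, ← sum_smul, hw.sum_row, FDist.sum_smul_point]
  · simp only [Fintype.sum_prod_type_right, ← sum_smul, hw.sum_col, FDist.sum_smul_point]

end

/-- `Δ R† Θ` iff there is a weight function `w : S × T → [0,1]` whose row sums
are `Δ`, whose column sums are `Θ`, and which is positive only on `R`-related
pairs. -/
theorem lift_iff_weight_function {S T : Type*} [Fintype S] [Fintype T]
    (R : S → T → Prop) (Δ : FDist S) (Θ : FDist T) :
    Lift R Δ Θ ↔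
      ∃ w : S → T → ℝ,
        (∀ s t, 0 ≤ w s t ∧ w s t ≤ 1) ∧
        (∀ s, ∑ t, w s t = Δ.f s) ∧
        (∀ t, ∑ s, w s t = Θ.f t) ∧
        (∀ s t, 0 < w s t → R s t) := by
  constructor
  · intro h
    obtain ⟨w, hw⟩ := h.exists_isWeightFunction
    exact ⟨w, fun s t => ⟨hw.nonneg s t, hw.le_one s t⟩, hw.sum_row, hw.sum_col, hw.rel⟩
  · rintro ⟨w, hw01, hrow, hcol, hR⟩
    exact Lift.of_isWeightFunction ⟨fun s t => (hw01 s t).1, hrow, hcol, hR⟩
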